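/- arXiv:2503.17861 — 2 statements merged into one kernel-verified Lean document; each statement's English description precedes it below -/
import Mathlib

section
/- A nonempty subset A ⊆ ℤ² is 8-connected if and only if Γ*(A) is a connected subset of K². -/
open TopologicalSpace

/-- Basic (minimal) neighborhoods generating the Khalimsky topology on ℤ. -/
def khN (n : ℤ) : Set ℤ := if Odd n then {n} else {n - 1, n, n + 1}

/-- The Khalimsky (digital) topology on the integers. -/
def khLine : TopologicalSpace ℤ := generateFrom (Set.range khN)

/-- The Khalimsky topology on the digital plane ℤ × ℤ (product topology). -/
def khPlane : TopologicalSpace (ℤ × ℤ) :=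
  @instTopologicalSpaceProd ℤ ℤ khLine khLine

/-- A point of the digital plane is pure if both coordinates have the same parity. -/
def IsPure (p : ℤ × ℤ) : Prop := p.1 % 2 = p.2 % 2

/-- A point of the digital plane is mixed if it is not pure. -/
def IsMixed (p : ℤ × ℤ) : Prop := ¬ IsPure p

/-- A closed (pure) point: both coordinates even. -/
def IsClosedPt (p : ℤ × ℤ) : Prop := Even p.1 ∧ Even p.2

/-- An open (pure) point: both coordinates odd. -/
def IsOpenPt (p : ℤ × ℤ) : Prop := Odd p.1 ∧ Odd p.2

/-- The minimal open neighborhood N(x) of a point in the digital plane. -/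
def minN (x : ℤ × ℤ) : Set (ℤ × ℤ) := ⋂₀ {U : Set (ℤ × ℤ) | khPlane.IsOpen U ∧ x ∈ U}

/-- The closure cl(x) of a singleton in the digital plane. -/
def clPt (x : ℤ × ℤ) : Set (ℤ × ℤ) := @closure (ℤ × ℤ) khPlane {x}

/-- The adjacency set A(x) of a point of the digital plane. -/
def AdjSet (x : ℤ × ℤ) : Set (ℤ × ℤ) :=
  {y | y ≠ x ∧ @IsConnected (ℤ × ℤ) khPlane {x, y}}

/-- An arc: a subset of the digital plane homeomorphic (in the subspace topology)
to a finite interval of the Khalimsky line. -/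
def IsArc (C : Set (ℤ × ℤ)) : Prop :=
  ∃ a b : ℤ,
    Nonempty (@Homeomorph (↥C) (↥(Set.Icc a b))
      (TopologicalSpace.induced Subtype.val khPlane)
      (TopologicalSpace.induced Subtype.val khLine))

/-- z is an endpoint of the arc C: it has exactly one adjacent point within C. -/
def IsEndpointOf (z : ℤ × ℤ) (C : Set (ℤ × ℤ)) : Prop :=
  z ∈ C ∧ (AdjSet z ∩ C).encard = 1

/-- A Jordan curve in the digital plane. -/
def IsJordanCurve (J : Set (ℤ × ℤ)) : Prop :=
  @IsConnected (ℤ × ℤ) khPlane J ∧ 4 ≤ J.encard ∧ ∀ x ∈ J, IsArc (J \ {x})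

/-- The slant embedding Γ(x,y) = (x+y, y−x) of the Rosenfeld plane into the digital plane. -/
def Γmap (p : ℤ × ℤ) : ℤ × ℤ := (p.1 + p.2, p.2 - p.1)

/-- The operator Γ* turning subsets of ℤ² into subsets of the digital plane. -/
def ΓStar (A : Set (ℤ × ℤ)) : Set (ℤ × ℤ) :=
  Γmap '' A ∪
    {x | IsMixed x ∧ (minN x ⊆ Γmap '' A ∪ {x} ∨ clPt x ⊆ Γmap '' A ∪ {x})}

/-- 8-adjacency in ℤ². -/
def Adj8 (p q : ℤ × ℤ) : Prop := p ≠ q ∧ |p.1 - q.1| ≤ 1 ∧ |p.2 - q.2| ≤ 1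

/-- 4-adjacency in ℤ². -/
def Adj4 (p q : ℤ × ℤ) : Prop := p ≠ q ∧ |p.1 - q.1| + |p.2 - q.2| = 1

/-- The 8-neighbours of x within C. -/
def nbrs8 (C : Set (ℤ × ℤ)) (x : ℤ × ℤ) : Set (ℤ × ℤ) := {y ∈ C | Adj8 x y}

/-- The 4-neighbours of x within C. -/
def nbrs4 (C : Set (ℤ × ℤ)) (x : ℤ × ℤ) : Set (ℤ × ℤ) := {y ∈ C | Adj4 x y}

/-- x is an 8-endpoint of C. -/
def Is8Endpoint (C : Set (ℤ × ℤ)) (x : ℤ × ℤ) : Prop :=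
  x ∈ C ∧ (nbrs8 C x).encard = 1

/-- x is a 4-endpoint of C. -/
def Is4Endpoint (C : Set (ℤ × ℤ)) (x : ℤ × ℤ) : Prop :=
  x ∈ C ∧ (nbrs4 C x).encard = 1

/-- An 8-path: a finite set with exactly two 8-endpoints, every other point
having exactly two 8-adjacent points in the set. -/
def Is8Path (C : Set (ℤ × ℤ)) : Prop :=
  C.Finite ∧ {x | Is8Endpoint C x}.encard = 2 ∧
    ∀ x ∈ C, ¬ Is8Endpoint C x → (nbrs8 C x).encard = 2

/-- A 4-path. -/
def Is4Path (C : Set (ℤ × ℤ)) : Prop :=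
  C.Finite ∧ {x | Is4Endpoint C x}.encard = 2 ∧
    ∀ x ∈ C, ¬ Is4Endpoint C x → (nbrs4 C x).encard = 2

/-- A closed 8-curve: every point has exactly two 8-adjacent points in the set. -/
def Is8ClosedCurve (C : Set (ℤ × ℤ)) : Prop :=
  C.Finite ∧ ∀ x ∈ C, (nbrs8 C x).encard = 2

/-- A closed 4-curve. -/
def Is4ClosedCurve (C : Set (ℤ × ℤ)) : Prop :=
  C.Finite ∧ ∀ x ∈ C, (nbrs4 C x).encard = 2

/-- 8-connectedness: there is no partition into two nonempty pieces that are
not 8-adjacent to each other. -/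
def Conn8 (S : Set (ℤ × ℤ)) : Prop :=
  ¬ ∃ A B : Set (ℤ × ℤ), A.Nonempty ∧ B.Nonempty ∧ A ∪ B = S ∧ A ∩ B = ∅ ∧
      ∀ a ∈ A, ∀ b ∈ B, ¬ Adj8 a b

/-- 4-connectedness. -/
def Conn4 (S : Set (ℤ × ℤ)) : Prop :=
  ¬ ∃ A B : Set (ℤ × ℤ), A.Nonempty ∧ B.Nonempty ∧ A ∪ B = S ∧ A ∩ B = ∅ ∧
      ∀ a ∈ A, ∀ b ∈ B, ¬ Adj4 a b

/-- T is a 4-component of S: a maximal 4-connected subset of S. -/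
def Is4CompOf (T S : Set (ℤ × ℤ)) : Prop :=
  T ⊆ S ∧ Conn4 T ∧ ∀ T' : Set (ℤ × ℤ), T ⊆ T' → T' ⊆ S → Conn4 T' → T' = T

/-- U is a connected component of S in the digital plane. -/
def IsCompOf (U S : Set (ℤ × ℤ)) : Prop :=
  ∃ x ∈ S, @connectedComponentIn (ℤ × ℤ) khPlane S x = U

/-- The set S_J of mixed points of Γ*(Γ⁻¹(J)) having exactly three adjacent points in J. -/
def SJ (J : Set (ℤ × ℤ)) : Set (ℤ × ℤ) :=
  {m | m ∈ ΓStar (Γmap ⁻¹' J) ∧ IsMixed m ∧ (AdjSet m ∩ J).encard = 3}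


section AuxKhalimsky


lemma mem_khN_iff {m n : ℤ} : m ∈ khN n ↔
    ((n % 2 = 1 ∧ m = n) ∨ (n % 2 = 0 ∧ (m = n - 1 ∨ m = n ∨ m = n + 1))) := by
  unfold khN
  by_cases h : Odd n
  · have h1 : n % 2 = 1 := Int.odd_iff.mp h
    simp [h, h1]
  · have h2 : n % 2 = 0 := by rw [Int.odd_iff] at h; omega
    simp [h, h2]

lemma self_mem_khN (n : ℤ) : n ∈ khN n := by rw [mem_khN_iff]; omega

lemma khN_sub {m n : ℤ} (h : m ∈ khN n) : khN m ⊆ khN n := by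
  intro k hk
  rw [mem_khN_iff] at *
  omega

lemma khN_isOpen (n : ℤ) : khLine.IsOpen (khN n) :=
  TopologicalSpace.GenerateOpen.basic _ ⟨n, rfl⟩

lemma isOpen_khLine_iff {U : Set ℤ} : khLine.IsOpen U ↔ ∀ n ∈ U, khN n ⊆ U := by
  constructor
  · intro h
    induction h with
    | basic s hs => obtain ⟨n, rfl⟩ := hs; exact fun m hm => khN_sub hm
    | univ => intro n _; exact Set.subset_univ _
    | inter s t _ _ ihs iht =>
        intro n hn; exact Set.subset_inter (ihs n hn.1) (iht n hn.2)
    | sUnion S _ ih =>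
        intro n hn
        obtain ⟨s, hs, hns⟩ := hn
        exact (ih s hs n hns).trans (Set.subset_sUnion_of_mem hs)
  · intro h
    letI : TopologicalSpace ℤ := khLine
    have : U = ⋃ n ∈ U, khN n := by
      apply Set.Subset.antisymm
      · intro n hn; exact Set.mem_biUnion hn (self_mem_khN n)
      · intro n hn
        obtain ⟨m, hm, hnm⟩ := Set.mem_iUnion₂.mp hn
        exact h m hm hnm
    rw [this]
    letI : TopologicalSpace ℤ := khLine
    exact isOpen_biUnion (fun n _ => khN_isOpen n)

def NNp (x : ℤ × ℤ) : Set (ℤ × ℤ) := khN x.1 ×ˢ khN x.2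

lemma mem_NNp_iff {y x : ℤ × ℤ} : y ∈ NNp x ↔ y.1 ∈ khN x.1 ∧ y.2 ∈ khN x.2 := Iff.rfl

lemma self_mem_NNp (x : ℤ × ℤ) : x ∈ NNp x := ⟨self_mem_khN _, self_mem_khN _⟩

lemma NNp_sub {y x : ℤ × ℤ} (h : y ∈ NNp x) : NNp y ⊆ NNp x := fun z hz =>
  ⟨khN_sub h.1 hz.1, khN_sub h.2 hz.2⟩

lemma isOpen_khPlane_iff {U : Set (ℤ × ℤ)} :
    khPlane.IsOpen U ↔ ∀ p ∈ U, NNp p ⊆ U := by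
  letI : TopologicalSpace ℤ := khLine
  show IsOpen U ↔ _
  constructor
  · intro h p hp
    rw [isOpen_prod_iff] at h
    obtain ⟨u, v, hu, hv, h1, h2, hsub⟩ := h p.1 p.2 hp
    intro z hz
    exact hsub ⟨isOpen_khLine_iff.mp hu p.1 h1 hz.1, isOpen_khLine_iff.mp hv p.2 h2 hz.2⟩
  · intro h
    have : U = ⋃ p ∈ U, NNp p := by
      apply Set.Subset.antisymm
      · intro p hp; exact Set.mem_biUnion hp (self_mem_NNp p)
      · intro p hp
        obtain ⟨q, hq, hpq⟩ := Set.mem_iUnion₂.mp hp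
        exact h q hq hpq
    rw [this]
    exact isOpen_biUnion (fun p _ => IsOpen.prod (khN_isOpen _) (khN_isOpen _))

lemma minN_eq (x : ℤ × ℤ) : minN x = NNp x := by
  apply Set.Subset.antisymm
  · exact Set.sInter_subset_of_mem ⟨isOpen_khPlane_iff.mpr (fun p hp => NNp_sub hp),
      self_mem_NNp x⟩
  · intro y hy
    rw [minN, Set.mem_sInter]
    rintro U ⟨hU, hxU⟩
    exact isOpen_khPlane_iff.mp hU x hxU hy

lemma mem_clPt_iff {y x : ℤ × ℤ} : y ∈ clPt x ↔ x ∈ NNp y := by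
  letI : TopologicalSpace (ℤ × ℤ) := khPlane
  show y ∈ closure {x} ↔ _
  rw [mem_closure_iff]
  constructor
  · intro h
    obtain ⟨z, hz1, hz2⟩ := h (NNp y) (isOpen_khPlane_iff.mpr (fun p hp => NNp_sub hp))
      (self_mem_NNp y)
    rwa [Set.mem_singleton_iff.mp hz2] at hz1
  · intro h o ho hyo
    exact ⟨x, isOpen_khPlane_iff.mp ho y hyo h, rfl⟩

lemma gamma_eq_iff {a : ℤ × ℤ} {s t : ℤ} :
    Γmap a = (s, t) ↔ a.1 + a.2 = s ∧ a.2 - a.1 = t := by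
  simp [Γmap, Prod.ext_iff]

lemma pure_of_mem_gamma {A : Set (ℤ × ℤ)} {x : ℤ × ℤ} (h : x ∈ Γmap '' A) :
    x.1 % 2 = x.2 % 2 := by
  obtain ⟨a, -, rfl⟩ := h
  show (a.1 + a.2) % 2 = (a.2 - a.1) % 2
  omega

lemma mixed_coords {m : ℤ × ℤ} (hm : IsMixed m) : ¬ (m.1 % 2 = m.2 % 2) := hm

/-- For a mixed point, explicit description of membership in `ΓStar A`. -/
lemma mixed_mem_iff {A : Set (ℤ × ℤ)} {m : ℤ × ℤ} (hm : IsMixed m) :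
    m ∈ ΓStar A ↔
      (((m.1, m.2 - 1) ∈ Γmap '' A ∧ (m.1, m.2 + 1) ∈ Γmap '' A) ∨
       ((m.1 - 1, m.2) ∈ Γmap '' A ∧ (m.1 + 1, m.2) ∈ Γmap '' A)) := by
  have hmp := mixed_coords hm
  have hnotim : m ∉ Γmap '' A := fun h => hmp (pure_of_mem_gamma h)
  have hne1 : ∀ c : ℤ, (m.1, c) ≠ m → True := fun _ _ => trivial
  constructor
  · rintro (h | ⟨-, h | h⟩)
    · exact absurd h hnotim
    · -- minN case
      rw [minN_eq] at h
      rcases Int.emod_emod_of_dvd m.1 (dvd_refl 2) with -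
      by_cases hc : m.1 % 2 = 1
      · -- m.1 odd, m.2 even : minN is the vertical triple
        left
        have hmem1 : ((m.1, m.2 - 1) : ℤ × ℤ) ∈ NNp m :=
          ⟨self_mem_khN _, by rw [mem_khN_iff]; omega⟩
        have hmem2 : ((m.1, m.2 + 1) : ℤ × ℤ) ∈ NNp m :=
          ⟨self_mem_khN _, by rw [mem_khN_iff]; omega⟩
        rcases h hmem1 with h1 | h1
        · rcases h hmem2 with h2 | h2
          · exact ⟨h1, h2⟩
          · exact absurd (congrArg Prod.snd (Set.mem_singleton_iff.mp h2)) (by omega)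
        · exact absurd (congrArg Prod.snd (Set.mem_singleton_iff.mp h1)) (by omega)
      · -- m.1 even, m.2 odd : minN is the horizontal triple
        right
        have hmem1 : ((m.1 - 1, m.2) : ℤ × ℤ) ∈ NNp m :=
          ⟨by rw [mem_khN_iff]; omega, self_mem_khN _⟩
        have hmem2 : ((m.1 + 1, m.2) : ℤ × ℤ) ∈ NNp m :=
          ⟨by rw [mem_khN_iff]; omega, self_mem_khN _⟩
        rcases h hmem1 with h1 | h1
        · rcases h hmem2 with h2 | h2
          · exact ⟨h1, h2⟩
          · exact absurd (congrArg Prod.fst (Set.mem_singleton_iff.mp h2)) (by omega)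
        · exact absurd (congrArg Prod.fst (Set.mem_singleton_iff.mp h1)) (by omega)
    · -- clPt case
      by_cases hc : m.1 % 2 = 1
      · -- m.1 odd, m.2 even : clPt is the horizontal triple
        right
        have hmem1 : ((m.1 - 1, m.2) : ℤ × ℤ) ∈ clPt m := by
          rw [mem_clPt_iff]
          exact ⟨by rw [mem_khN_iff]; omega, self_mem_khN _⟩
        have hmem2 : ((m.1 + 1, m.2) : ℤ × ℤ) ∈ clPt m := by
          rw [mem_clPt_iff]
          exact ⟨by rw [mem_khN_iff]; omega, self_mem_khN _⟩
        rcases h hmem1 with h1 | h1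
        · rcases h hmem2 with h2 | h2
          · exact ⟨h1, h2⟩
          · exact absurd (congrArg Prod.fst (Set.mem_singleton_iff.mp h2)) (by omega)
        · exact absurd (congrArg Prod.fst (Set.mem_singleton_iff.mp h1)) (by omega)
      · -- m.1 even, m.2 odd : clPt is the vertical triple
        left
        have hmem1 : ((m.1, m.2 - 1) : ℤ × ℤ) ∈ clPt m := by
          rw [mem_clPt_iff]
          exact ⟨self_mem_khN _, by rw [mem_khN_iff]; omega⟩
        have hmem2 : ((m.1, m.2 + 1) : ℤ × ℤ) ∈ clPt m := by
          rw [mem_clPt_iff]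
          exact ⟨self_mem_khN _, by rw [mem_khN_iff]; omega⟩
        rcases h hmem1 with h1 | h1
        · rcases h hmem2 with h2 | h2
          · exact ⟨h1, h2⟩
          · exact absurd (congrArg Prod.snd (Set.mem_singleton_iff.mp h2)) (by omega)
        · exact absurd (congrArg Prod.snd (Set.mem_singleton_iff.mp h1)) (by omega)
  · intro h
    right
    refine ⟨hm, ?_⟩
    by_cases hc : m.1 % 2 = 1
    · rcases h with ⟨h1, h2⟩ | ⟨h1, h2⟩
      · -- vertical pair, m.1 odd : use minN
        left
        rw [minN_eq]
        rintro ⟨y1, y2⟩ ⟨hy1, hy2⟩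
        rw [mem_khN_iff] at hy1 hy2
        have : (y1 = m.1 ∧ y2 = m.2 - 1) ∨ (y1 = m.1 ∧ y2 = m.2) ∨
            (y1 = m.1 ∧ y2 = m.2 + 1) := by omega
        rcases this with ⟨rfl, rfl⟩ | ⟨rfl, rfl⟩ | ⟨rfl, rfl⟩
        · exact Or.inl h1
        · exact Or.inr (by simp)
        · exact Or.inl h2
      · -- horizontal pair, m.1 odd : use clPt
        right
        rintro ⟨y1, y2⟩ hy
        rw [mem_clPt_iff] at hy
        obtain ⟨hy1, hy2⟩ := hy
        rw [mem_khN_iff] at hy1 hy2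
        have : (y1 = m.1 - 1 ∧ y2 = m.2) ∨ (y1 = m.1 ∧ y2 = m.2) ∨
            (y1 = m.1 + 1 ∧ y2 = m.2) := by omega
        rcases this with ⟨rfl, rfl⟩ | ⟨rfl, rfl⟩ | ⟨rfl, rfl⟩
        · exact Or.inl h1
        · exact Or.inr (by simp)
        · exact Or.inl h2
    · rcases h with ⟨h1, h2⟩ | ⟨h1, h2⟩
      · -- vertical pair, m.1 even : use clPt
        right
        rintro ⟨y1, y2⟩ hy
        rw [mem_clPt_iff] at hy
        obtain ⟨hy1, hy2⟩ := hy
        rw [mem_khN_iff] at hy1 hy2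
        have : (y1 = m.1 ∧ y2 = m.2 - 1) ∨ (y1 = m.1 ∧ y2 = m.2) ∨
            (y1 = m.1 ∧ y2 = m.2 + 1) := by omega
        rcases this with ⟨rfl, rfl⟩ | ⟨rfl, rfl⟩ | ⟨rfl, rfl⟩
        · exact Or.inl h1
        · exact Or.inr (by simp)
        · exact Or.inl h2
      · -- horizontal pair, m.1 even : use minN
        left
        rw [minN_eq]
        rintro ⟨y1, y2⟩ ⟨hy1, hy2⟩
        rw [mem_khN_iff] at hy1 hy2
        have : (y1 = m.1 - 1 ∧ y2 = m.2) ∨ (y1 = m.1 ∧ y2 = m.2) ∨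
            (y1 = m.1 + 1 ∧ y2 = m.2) := by omega
        rcases this with ⟨rfl, rfl⟩ | ⟨rfl, rfl⟩ | ⟨rfl, rfl⟩
        · exact Or.inl h1
        · exact Or.inr (by simp)
        · exact Or.inl h2

lemma gammaStar_elim {A : Set (ℤ × ℤ)} {x : ℤ × ℤ} (h : x ∈ ΓStar A) :
    ∃ a ∈ A, (Γmap a = x ∨ Γmap a = (x.1, x.2 - 1) ∨ Γmap a = (x.1 - 1, x.2)) := by
  rcases h with ⟨a, ha, hga⟩ | ⟨hm, hcond⟩
  · exact ⟨a, ha, Or.inl hga⟩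
  · have := (mixed_mem_iff hm).mp (Or.inr ⟨hm, hcond⟩)
    rcases this with ⟨⟨a, ha, hga⟩, -⟩ | ⟨⟨a, ha, hga⟩, -⟩
    · exact ⟨a, ha, Or.inr (Or.inl hga)⟩
    · exact ⟨a, ha, Or.inr (Or.inr hga)⟩

lemma eq_or_adj8 {a b : ℤ × ℤ} (h1 : a.1 - b.1 ≤ 1) (h2 : b.1 - a.1 ≤ 1)
    (h3 : a.2 - b.2 ≤ 1) (h4 : b.2 - a.2 ≤ 1) : a = b ∨ Adj8 a b := by
  by_cases h : a.1 = b.1 ∧ a.2 = b.2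
  · exact Or.inl (Prod.ext_iff.mpr h)
  · refine Or.inr ⟨fun he => h ⟨congrArg Prod.fst he, congrArg Prod.snd he⟩, ?_, ?_⟩ <;>
      rw [abs_le] <;> omega

/-- If no point of A₁ equals or is 8-adjacent to a point of A₂, then no point of
ΓStar A₂ lies in the minimal neighbourhood of a point of ΓStar A₁. -/
lemma no_adjacency {A₁ A₂ : Set (ℤ × ℤ)}
    (h : ∀ a ∈ A₁, ∀ b ∈ A₂, a ≠ b ∧ ¬ Adj8 a b)
    {p q : ℤ × ℤ} (hp : p ∈ ΓStar A₁) (hq : q ∈ ΓStar A₂) : q ∉ NNp p := by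
  intro hqp
  obtain ⟨hq1, hq2⟩ := mem_NNp_iff.mp hqp
  rw [mem_khN_iff] at hq1 hq2
  obtain ⟨a, ha, hga⟩ := gammaStar_elim hp
  obtain ⟨b, hb, hgb⟩ := gammaStar_elim hq
  obtain ⟨hne, hnadj⟩ := h a ha b hb
  rcases hga with hga | hga | hga <;> rcases hgb with hgb | hgb | hgb <;>
    rw [show ∀ u v : ℤ × ℤ, (Γmap u = v) = (u.1 + u.2 = v.1 ∧ u.2 - u.1 = v.2)
      from fun u v => propext (by simp [Γmap, Prod.ext_iff])] at hga hgb <;>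
    obtain ⟨ha1, ha2⟩ := hga <;> obtain ⟨hb1, hb2⟩ := hgb <;>
    rcases eq_or_adj8 (a := a) (b := b) (by simp at ha1 ha2 hb1 hb2 ⊢; omega)
      (by simp at ha1 ha2 hb1 hb2 ⊢; omega) (by simp at ha1 ha2 hb1 hb2 ⊢; omega)
      (by simp at ha1 ha2 hb1 hb2 ⊢; omega) with he | hadj
  all_goals first | exact hne he | exact hnadj hadj

lemma rel_unitH (x : ℤ × ℤ) :
    ((x.1 + 1, x.2) : ℤ × ℤ) ∈ NNp x ∨ x ∈ NNp (x.1 + 1, x.2) := by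
  by_cases h : x.1 % 2 = 0
  · exact Or.inl ⟨by rw [mem_khN_iff]; omega, self_mem_khN _⟩
  · exact Or.inr ⟨by rw [mem_khN_iff]; omega, self_mem_khN _⟩

lemma rel_unitV (x : ℤ × ℤ) :
    ((x.1, x.2 + 1) : ℤ × ℤ) ∈ NNp x ∨ x ∈ NNp (x.1, x.2 + 1) := by
  by_cases h : x.2 % 2 = 0
  · exact Or.inl ⟨self_mem_khN _, by rw [mem_khN_iff]; omega⟩
  · exact Or.inr ⟨self_mem_khN _, by rw [mem_khN_iff]; omega⟩

lemma rel_diag (x : ℤ × ℤ) (s t : ℤ) (hs : s = 1 ∨ s = -1) (ht : t = 1 ∨ t = -1)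
    (hp : x.1 % 2 = x.2 % 2) :
    ((x.1 + s, x.2 + t) : ℤ × ℤ) ∈ NNp x ∨ x ∈ NNp (x.1 + s, x.2 + t) := by
  by_cases h : x.1 % 2 = 0
  · exact Or.inl ⟨by rw [mem_khN_iff]; omega, by rw [mem_khN_iff]; omega⟩
  · exact Or.inr ⟨by rw [mem_khN_iff]; omega, by rw [mem_khN_iff]; omega⟩

section SameSide

variable {u v S : Set (ℤ × ℤ)}
  (hu : khPlane.IsOpen u) (hv : khPlane.IsOpen v)
  (hcov : S ⊆ u ∪ v) (hdisj : S ∩ (u ∩ v) = ∅)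

include hu hv hcov hdisj in
lemma same_side {x y : ℤ × ℤ} (hx : x ∈ S) (hy : y ∈ S)
    (hrel : y ∈ NNp x ∨ x ∈ NNp y) : (x ∈ u ↔ y ∈ u) := by
  have key : ∀ z w : ℤ × ℤ, z ∈ S → w ∈ S → w ∈ NNp z → (z ∈ u ↔ w ∈ u) := by
    intro z w hz hw hwz
    by_cases hzu : z ∈ u
    · have hwu : w ∈ u := isOpen_khPlane_iff.mp hu z hzu hwz
      simp [hzu, hwu]
    · have hzv : z ∈ v := (hcov hz).resolve_left hzu
      have hwv : w ∈ v := isOpen_khPlane_iff.mp hv z hzv hwz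
      have hwu : w ∉ u := fun hwu =>
        Set.eq_empty_iff_forall_notMem.mp hdisj w ⟨hw, hwu, hwv⟩
      simp [hzu, hwu]
  rcases hrel with hr | hr
  · exact key x y hx hy hr
  · exact (key y x hy hx hr).symm

end SameSide

section Bridge

variable {u v S : Set (ℤ × ℤ)}
  (hu : khPlane.IsOpen u) (hv : khPlane.IsOpen v)
  (hcov : S ⊆ u ∪ v) (hdisj : S ∩ (u ∩ v) = ∅)

include hu hv hcov hdisj in
lemma bridgeH {A : Set (ℤ × ℤ)} (hS : S = ΓStar A) {a b : ℤ × ℤ}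
    (ha : a ∈ A) (hb : b ∈ A) {m : ℤ × ℤ}
    (hga : Γmap a = (m.1 + 1, m.2)) (hgb : Γmap b = (m.1 - 1, m.2)) :
    (Γmap a ∈ u ↔ Γmap b ∈ u) := by
  have hea := gamma_eq_iff.mp hga
  have hmix : IsMixed m := by
    simp only [IsMixed, IsPure]
    omega
  have hmS : m ∈ S := by
    rw [hS]
    exact (mixed_mem_iff hmix).mpr (Or.inr ⟨⟨b, hb, hgb⟩, ⟨a, ha, hga⟩⟩)
  have haS : Γmap a ∈ S := hS ▸ Or.inl ⟨a, ha, rfl⟩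
  have hbS : Γmap b ∈ S := hS ▸ Or.inl ⟨b, hb, rfl⟩
  have hrel1 : Γmap a ∈ NNp m ∨ m ∈ NNp (Γmap a) := by rw [hga]; exact rel_unitH m
  have hrel2 : Γmap b ∈ NNp m ∨ m ∈ NNp (Γmap b) := by
    rw [hgb]
    have := rel_unitH (m.1 - 1, m.2)
    simp only [sub_add_cancel] at this
    exact Or.symm (by simpa using this)
  have e1 := same_side hu hv hcov hdisj hmS haS hrel1
  have e2 := same_side hu hv hcov hdisj hmS hbS hrel2
  rw [← e1, e2]

include hu hv hcov hdisj in
lemma bridgeV {A : Set (ℤ × ℤ)} (hS : S = ΓStar A) {a b : ℤ × ℤ}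
    (ha : a ∈ A) (hb : b ∈ A) {m : ℤ × ℤ}
    (hga : Γmap a = (m.1, m.2 + 1)) (hgb : Γmap b = (m.1, m.2 - 1)) :
    (Γmap a ∈ u ↔ Γmap b ∈ u) := by
  have hea := gamma_eq_iff.mp hga
  have hmix : IsMixed m := by
    simp only [IsMixed, IsPure]
    omega
  have hmS : m ∈ S := by
    rw [hS]
    exact (mixed_mem_iff hmix).mpr (Or.inl ⟨⟨b, hb, hgb⟩, ⟨a, ha, hga⟩⟩)
  have haS : Γmap a ∈ S := hS ▸ Or.inl ⟨a, ha, rfl⟩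
  have hbS : Γmap b ∈ S := hS ▸ Or.inl ⟨b, hb, rfl⟩
  have hrel1 : Γmap a ∈ NNp m ∨ m ∈ NNp (Γmap a) := by rw [hga]; exact rel_unitV m
  have hrel2 : Γmap b ∈ NNp m ∨ m ∈ NNp (Γmap b) := by
    rw [hgb]
    have := rel_unitV (m.1, m.2 - 1)
    simp only [sub_add_cancel] at this
    exact Or.symm (by simpa using this)
  have e1 := same_side hu hv hcov hdisj hmS haS hrel1
  have e2 := same_side hu hv hcov hdisj hmS hbS hrel2
  rw [← e1, e2]

include hu hv hcov hdisj in
lemma adj_same_side {A : Set (ℤ × ℤ)} (hS : S = ΓStar A) {a b : ℤ × ℤ}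
    (ha : a ∈ A) (hb : b ∈ A) (hadj : Adj8 a b) : (Γmap a ∈ u ↔ Γmap b ∈ u) := by
  obtain ⟨hne, hd1, hd2⟩ := hadj
  rw [abs_le] at hd1 hd2
  have hne' : ¬(a.1 = b.1 ∧ a.2 = b.2) := fun hc => hne (Prod.ext_iff.mpr hc)
  have haS : Γmap a ∈ S := hS ▸ Or.inl ⟨a, ha, rfl⟩
  have hbS : Γmap b ∈ S := hS ▸ Or.inl ⟨b, hb, rfl⟩
  by_cases hax : a.1 = b.1 ∨ a.2 = b.2
  · -- 4-adjacent: Γ images are diagonal neighbours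
    obtain ⟨s, t, hs, ht, hEq⟩ : ∃ s t, (s = 1 ∨ s = -1) ∧ (t = 1 ∨ t = -1) ∧
        Γmap a = ((Γmap b).1 + s, (Γmap b).2 + t) := by
      refine ⟨a.1 + a.2 - b.1 - b.2, a.2 - a.1 - b.2 + b.1, by omega, by omega, ?_⟩
      simp [Γmap, Prod.ext_iff] <;> omega
    have hQpure : (Γmap b).1 % 2 = (Γmap b).2 % 2 := by simp [Γmap] <;> omega
    have hrel : Γmap a ∈ NNp (Γmap b) ∨ Γmap b ∈ NNp (Γmap a) := by
      rw [hEq]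
      exact rel_diag (Γmap b) s t hs ht hQpure
    exact (same_side hu hv hcov hdisj hbS haS (Or.symm hrel.symm)).symm
  · -- diagonal: Γ images differ by (±2,0) or (0,±2)
    push_neg at hax
    by_cases hdd : a.1 - b.1 = a.2 - b.2
    · -- Γ difference horizontal
      by_cases hpos : a.1 - b.1 = 1
      · exact bridgeH hu hv hcov hdisj hS ha hb
          (m := (b.1 + b.2 + 1, b.2 - b.1))
          (gamma_eq_iff.mpr ⟨by simp <;> omega, by simp <;> omega⟩)
          (gamma_eq_iff.mpr ⟨by simp <;> omega, by simp <;> omega⟩)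
      · exact (bridgeH hu hv hcov hdisj hS hb ha
          (m := (a.1 + a.2 + 1, a.2 - a.1))
          (gamma_eq_iff.mpr ⟨by simp <;> omega, by simp <;> omega⟩)
          (gamma_eq_iff.mpr ⟨by simp <;> omega, by simp <;> omega⟩)).symm
    · -- Γ difference vertical
      by_cases hpos : a.2 - b.2 = 1
      · exact bridgeV hu hv hcov hdisj hS ha hb
          (m := (b.1 + b.2, b.2 - b.1 + 1))
          (gamma_eq_iff.mpr ⟨by simp <;> omega, by simp <;> omega⟩)
          (gamma_eq_iff.mpr ⟨by simp <;> omega, by simp <;> omega⟩)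
      · exact (bridgeV hu hv hcov hdisj hS hb ha
          (m := (a.1 + a.2, a.2 - a.1 + 1))
          (gamma_eq_iff.mpr ⟨by simp <;> omega, by simp <;> omega⟩)
          (gamma_eq_iff.mpr ⟨by simp <;> omega, by simp <;> omega⟩)).symm

end Bridge

section Anchor

variable {u v S : Set (ℤ × ℤ)}
  (hu : khPlane.IsOpen u) (hv : khPlane.IsOpen v)
  (hcov : S ⊆ u ∪ v) (hdisj : S ∩ (u ∩ v) = ∅)

include hu hv hcov hdisj in
lemma anchor {A : Set (ℤ × ℤ)} (hS : S = ΓStar A) {z : ℤ × ℤ}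
    (hz : z ∈ S) (hzu : z ∈ u) : ∃ a ∈ A, Γmap a ∈ u := by
  obtain ⟨a, ha, hga⟩ := gammaStar_elim (show z ∈ ΓStar A from hS ▸ hz)
  have haS : Γmap a ∈ S := hS ▸ Or.inl ⟨a, ha, rfl⟩
  rcases hga with h | h | h
  · exact ⟨a, ha, h ▸ hzu⟩
  · have h1 : (Γmap a).1 = z.1 := by rw [h]
    have h2 : (Γmap a).2 = z.2 - 1 := by rw [h]
    have hz' : z = ((Γmap a).1, (Γmap a).2 + 1) := by
      rw [Prod.ext_iff]; constructor <;> simp <;> omega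
    have hrel : z ∈ NNp (Γmap a) ∨ Γmap a ∈ NNp z := by
      rw [hz']; exact rel_unitV (Γmap a)
    exact ⟨a, ha, (same_side hu hv hcov hdisj haS hz hrel).mpr hzu⟩
  · have h1 : (Γmap a).1 = z.1 - 1 := by rw [h]
    have h2 : (Γmap a).2 = z.2 := by rw [h]
    have hz' : z = ((Γmap a).1 + 1, (Γmap a).2) := by
      rw [Prod.ext_iff]; constructor <;> simp <;> omega
    have hrel : z ∈ NNp (Γmap a) ∨ Γmap a ∈ NNp z := by
      rw [hz']; exact rel_unitH (Γmap a)
    exact ⟨a, ha, (same_side hu hv hcov hdisj haS hz hrel).mpr hzu⟩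

end Anchor

lemma conn8_forward {A : Set (ℤ × ℤ)} (hA : A.Nonempty) (hc : Conn8 A) :
    @IsConnected (ℤ × ℤ) khPlane (ΓStar A) := by
  letI : TopologicalSpace (ℤ × ℤ) := khPlane
  obtain ⟨a0, ha0⟩ := hA
  constructor
  · exact ⟨Γmap a0, Or.inl ⟨a0, ha0, rfl⟩⟩
  · intro u v hu hv hcov hnu hnv
    by_contra hne
    rw [Set.not_nonempty_iff_eq_empty] at hne
    obtain ⟨zu, hzuS, hzuu⟩ := hnu
    obtain ⟨zv, hzvS, hzvv⟩ := hnv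
    have hcov' : ΓStar A ⊆ v ∪ u := by rwa [Set.union_comm] at hcov
    have hne' : ΓStar A ∩ (v ∩ u) = ∅ := by rwa [Set.inter_comm u v] at hne
    obtain ⟨a1, ha1, hga1⟩ := anchor hu hv hcov hne rfl hzuS hzuu
    obtain ⟨b1, hb1, hgb1⟩ := anchor hv hu hcov' hne' rfl hzvS hzvv
    have hgb1' : Γmap b1 ∉ u := fun hgu =>
      Set.eq_empty_iff_forall_notMem.mp hne (Γmap b1)
        ⟨Or.inl ⟨b1, hb1, rfl⟩, hgu, hgb1⟩
    refine hc ⟨{a ∈ A | Γmap a ∈ u}, {a ∈ A | Γmap a ∉ u}, ⟨a1, ha1, hga1⟩,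
      ⟨b1, hb1, hgb1'⟩, ?_, ?_, ?_⟩
    · ext a
      constructor
      · rintro (h | h) <;> exact h.1
      · intro ha
        by_cases h : Γmap a ∈ u
        · exact Or.inl ⟨ha, h⟩
        · exact Or.inr ⟨ha, h⟩
    · ext a
      simp only [Set.mem_inter_iff, Set.mem_setOf_eq, Set.mem_empty_iff_false, iff_false]
      tauto
    · rintro a ⟨ha, hau⟩ b ⟨hb, hbu⟩ hadj
      exact hbu ((adj_same_side hu hv hcov hne rfl ha hb hadj).mp hau)

lemma gammaStar_cover {A A₁ B : Set (ℤ × ℤ)} (hun : A₁ ∪ B = A) (hint : A₁ ∩ B = ∅)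
    (hnadj : ∀ a ∈ A₁, ∀ b ∈ B, ¬ Adj8 a b) :
    ΓStar A ⊆ ΓStar A₁ ∪ ΓStar B := by
  intro x hx
  have hmem : ∀ c : ℤ × ℤ, c ∈ A → c ∈ A₁ ∨ c ∈ B := fun c hc => by rw [← hun] at hc; exact hc
  rcases hx with ⟨a, ha, rfl⟩ | ⟨hm, hcond⟩
  · rcases hmem a ha with h | h
    · exact Or.inl (Or.inl ⟨a, h, rfl⟩)
    · exact Or.inr (Or.inl ⟨a, h, rfl⟩)
  · rcases (mixed_mem_iff hm).mp (Or.inr ⟨hm, hcond⟩) with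
      ⟨⟨a, ha, hga⟩, ⟨b, hb, hgb⟩⟩ | ⟨⟨a, ha, hga⟩, ⟨b, hb, hgb⟩⟩
    all_goals {
      have hca := gamma_eq_iff.mp hga
      have hcb := gamma_eq_iff.mp hgb
      have hadj : Adj8 a b := by
        refine ⟨fun he => ?_, by rw [abs_le]; omega, by rw [abs_le]; omega⟩
        · have e1 := congrArg Prod.fst he
          have e2 := congrArg Prod.snd he
          omega
      have hadj' : Adj8 b a := ⟨fun he => hadj.1 he.symm,
        by rw [abs_sub_comm]; exact hadj.2.1, by rw [abs_sub_comm]; exact hadj.2.2⟩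
      rcases hmem a ha with h1 | h1 <;> rcases hmem b hb with h2 | h2
      · exact Or.inl ((mixed_mem_iff hm).mpr (by
          first
          | exact Or.inl ⟨⟨a, h1, hga⟩, ⟨b, h2, hgb⟩⟩
          | exact Or.inr ⟨⟨a, h1, hga⟩, ⟨b, h2, hgb⟩⟩))
      · exact absurd hadj (hnadj a h1 b h2)
      · exact absurd hadj' (hnadj b h2 a h1)
      · exact Or.inr ((mixed_mem_iff hm).mpr (by
          first
          | exact Or.inl ⟨⟨a, h1, hga⟩, ⟨b, h2, hgb⟩⟩
          | exact Or.inr ⟨⟨a, h1, hga⟩, ⟨b, h2, hgb⟩⟩))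
    }

lemma conn8_backward {A : Set (ℤ × ℤ)}
    (hconn : @IsConnected (ℤ × ℤ) khPlane (ΓStar A)) : Conn8 A := by
  letI : TopologicalSpace (ℤ × ℤ) := khPlane
  rintro ⟨A₁, B, hne1, hne2, hun, hint, hnadj⟩
  have h' : ∀ a ∈ A₁, ∀ b ∈ B, a ≠ b ∧ ¬ Adj8 a b := by
    intro a ha b hb
    refine ⟨fun he => ?_, hnadj a ha b hb⟩
    exact Set.eq_empty_iff_forall_notMem.mp hint a ⟨ha, he ▸ hb⟩
  have hsym : ∀ b ∈ B, ∀ a ∈ A₁, b ≠ a ∧ ¬ Adj8 b a := by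
    intro b hb a ha
    obtain ⟨hne, hnad⟩ := h' a ha b hb
    exact ⟨hne.symm, fun hadj => hnad ⟨fun he => hadj.1 he.symm,
      by rw [abs_sub_comm]; exact hadj.2.1, by rw [abs_sub_comm]; exact hadj.2.2⟩⟩
  set U : Set (ℤ × ℤ) := ⋃ x ∈ ΓStar A₁, NNp x with hUdef
  set V : Set (ℤ × ℤ) := ⋃ x ∈ ΓStar B, NNp x with hVdef
  have hU : khPlane.IsOpen U := isOpen_khPlane_iff.mpr (by
    intro p hp
    obtain ⟨x, hx, hpx⟩ := Set.mem_iUnion₂.mp hp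
    exact (NNp_sub hpx).trans (Set.subset_iUnion₂_of_subset x hx (subset_refl _)))
  have hV : khPlane.IsOpen V := isOpen_khPlane_iff.mpr (by
    intro p hp
    obtain ⟨x, hx, hpx⟩ := Set.mem_iUnion₂.mp hp
    exact (NNp_sub hpx).trans (Set.subset_iUnion₂_of_subset x hx (subset_refl _)))
  have hcover : ΓStar A ⊆ U ∪ V := by
    intro x hx
    rcases gammaStar_cover hun hint hnadj hx with h | h
    · exact Or.inl (Set.mem_biUnion h (self_mem_NNp x))
    · exact Or.inr (Set.mem_biUnion h (self_mem_NNp x))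
  have hempty : ΓStar A ∩ (U ∩ V) = ∅ := by
    rw [Set.eq_empty_iff_forall_notMem]
    rintro z ⟨hzS, hzU, hzV⟩
    obtain ⟨x, hx, hzx⟩ := Set.mem_iUnion₂.mp hzU
    obtain ⟨y, hy, hzy⟩ := Set.mem_iUnion₂.mp hzV
    rcases gammaStar_cover hun hint hnadj hzS with h | h
    · exact no_adjacency hsym hy h hzy
    · exact no_adjacency h' hx h hzx
  have hnuU : (ΓStar A ∩ U).Nonempty := by
    obtain ⟨a, ha⟩ := hne1
    have haA : a ∈ A := hun ▸ Or.inl ha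
    exact ⟨Γmap a, Or.inl ⟨a, haA, rfl⟩,
      Set.mem_biUnion (Or.inl ⟨a, ha, rfl⟩) (self_mem_NNp _)⟩
  have hnuV : (ΓStar A ∩ V).Nonempty := by
    obtain ⟨b, hb⟩ := hne2
    have hbA : b ∈ A := hun ▸ Or.inr hb
    exact ⟨Γmap b, Or.inl ⟨b, hbA, rfl⟩,
      Set.mem_biUnion (Or.inl ⟨b, hb, rfl⟩) (self_mem_NNp _)⟩
  obtain ⟨z, hz⟩ := hconn.isPreconnected U V hU hV hcover hnuU hnuV
  exact Set.eq_empty_iff_forall_notMem.mp hempty z hz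


end AuxKhalimsky

/-- A nonempty subset A ⊆ ℤ² is 8-connected iff Γ*(A) is connected in the digital plane. -/
theorem conn8_iff_gammaStar_connected (A : Set (ℤ × ℤ)) (hA : A.Nonempty) :
    Conn8 A ↔ @IsConnected (ℤ × ℤ) khPlane (ΓStar A) :=
  ⟨conn8_forward hA, conn8_backward⟩
end

section
/- For any A ⊆ ℤ², if Γ(A) is a connected subset of K², then Γ*(A) is a connected subset of K². -/
open TopologicalSpace

lemma khLine_even_mem {n : ℤ} (hn : Even n) :
    ∀ U : Set ℤ, khLine.IsOpen U → n ∈ U → n - 1 ∈ U ∧ n + 1 ∈ U := by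
  intro U hU
  induction hU with
  | basic V hV =>
    intro h
    obtain ⟨m, rfl⟩ := hV
    unfold khN at h ⊢
    obtain ⟨k, hk⟩ := hn
    split_ifs at h ⊢ with hm
    · obtain ⟨j, hj⟩ := hm
      simp only [Set.mem_singleton_iff] at h
      omega
    · have hm' : Even m := Int.not_odd_iff_even.mp hm
      obtain ⟨j, hj⟩ := hm'
      simp only [Set.mem_insert_iff, Set.mem_singleton_iff] at h ⊢
      omega
  | univ => intro _; simp
  | inter U V _ _ ihU ihV =>
    intro h
    exact ⟨⟨(ihU h.1).1, (ihV h.2).1⟩, ⟨(ihU h.1).2, (ihV h.2).2⟩⟩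
  | sUnion S _ ih =>
    intro h
    obtain ⟨V, hV, hnV⟩ := h
    exact ⟨Set.mem_sUnion.2 ⟨V, hV, (ih V hV hnV).1⟩,
           Set.mem_sUnion.2 ⟨V, hV, (ih V hV hnV).2⟩⟩

lemma khPlane_step1 {U : Set (ℤ × ℤ)} (hU : khPlane.IsOpen U) {a b : ℤ} (ha : Even a)
    (h : (a, b) ∈ U) : (a - 1, b) ∈ U ∧ (a + 1, b) ∈ U := by
  letI := khLine
  have hU' : IsOpen U := hU
  rcases (isOpen_prod_iff.mp hU' a b h) with ⟨V, W, hV, hW, haV, hbW, hsub⟩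
  have := khLine_even_mem ha V hV haV
  exact ⟨hsub ⟨this.1, hbW⟩, hsub ⟨this.2, hbW⟩⟩

lemma khPlane_step2 {U : Set (ℤ × ℤ)} (hU : khPlane.IsOpen U) {a b : ℤ} (hb : Even b)
    (h : (a, b) ∈ U) : (a, b - 1) ∈ U ∧ (a, b + 1) ∈ U := by
  letI := khLine
  have hU' : IsOpen U := hU
  rcases (isOpen_prod_iff.mp hU' a b h) with ⟨V, W, hV, hW, haV, hbW, hsub⟩
  have := khLine_even_mem hb W hW hbW
  exact ⟨hsub ⟨haV, this.1⟩, hsub ⟨haV, this.2⟩⟩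

/-- For a mixed point x there is y ≠ x with y ∈ minN x. -/
lemma exists_ne_mem_minN (x : ℤ × ℤ) (hx : IsMixed x) : ∃ y, y ≠ x ∧ y ∈ minN x := by
  unfold IsMixed IsPure at hx
  rcases Int.even_or_odd x.1 with h1 | h1
  · refine ⟨(x.1 - 1, x.2), by simp [Prod.ext_iff], ?_⟩
    intro U hU
    exact (khPlane_step1 hU.1 h1 hU.2).1
  · have h2 : Even x.2 := by
      rcases Int.even_or_odd x.2 with h | h
      · exact h
      · exfalso; exact hx (by rw [Int.odd_iff.mp h1, Int.odd_iff.mp h])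
    refine ⟨(x.1, x.2 - 1), by simp [Prod.ext_iff], ?_⟩
    intro U hU
    exact (khPlane_step2 hU.1 h2 hU.2).1

/-- For a mixed point x there is y ≠ x with y ∈ clPt x. -/
lemma exists_ne_mem_clPt (x : ℤ × ℤ) (hx : IsMixed x) : ∃ y, y ≠ x ∧ y ∈ clPt x := by
  letI := khPlane
  unfold IsMixed IsPure at hx
  rcases Int.even_or_odd x.1 with h1 | h1
  · -- x.1 even, x.2 odd: take (x.1, x.2 - 1), both-even point
    have h2 : Odd x.2 := by
      rcases Int.even_or_odd x.2 with h | h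
      · exfalso; exact hx (by rw [Int.even_iff.mp h1, Int.even_iff.mp h])
      · exact h
    refine ⟨(x.1, x.2 - 1), by simp [Prod.ext_iff], ?_⟩
    rw [clPt, mem_closure_iff]
    intro o ho hmem
    refine ⟨x, ?_, rfl⟩
    have hb : Even (x.2 - 1) := by
      obtain ⟨k, hk⟩ := h2; exact ⟨k, by omega⟩
    have := (khPlane_step2 ho hb hmem).2
    simpa using this
  · have h2 : Even x.2 := by
      rcases Int.even_or_odd x.2 with h | h
      · exact h
      · exfalso; exact hx (by rw [Int.odd_iff.mp h1, Int.odd_iff.mp h])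
    refine ⟨(x.1 - 1, x.2), by simp [Prod.ext_iff], ?_⟩
    rw [clPt, mem_closure_iff]
    intro o ho hmem
    refine ⟨x, ?_, rfl⟩
    have ha : Even (x.1 - 1) := by
      obtain ⟨k, hk⟩ := h1; exact ⟨k, by omega⟩
    have := (khPlane_step1 ho ha hmem).2
    simpa using this


/-- If Γ(A) is connected in the digital plane, then so is Γ*(A). -/
theorem gammaStar_connected_of_image_connected (A : Set (ℤ × ℤ))
    (h : @IsConnected (ℤ × ℤ) khPlane (Γmap '' A)) :
    @IsConnected (ℤ × ℤ) khPlane (ΓStar A) := by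
  letI := khPlane
  obtain ⟨⟨s0, hs0⟩, hpre⟩ := h
  constructor
  · exact ⟨s0, Or.inl hs0⟩
  · -- each insert x (Γmap '' A) for x ∈ ΓStar A is preconnected
    have key : ∀ x ∈ ΓStar A, IsPreconnected (insert x (Γmap '' A)) := by
      intro x hx
      rcases hx with hx | ⟨hmix, hcase⟩
      · rw [Set.insert_eq_self.mpr hx]; exact hpre
      · -- get y ≠ x with y ∈ Γmap '' A and {x, y} preconnected
        have : ∃ y, y ≠ x ∧ y ∈ Γmap '' A ∧ IsPreconnected ({x, y} : Set (ℤ × ℤ)) := by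
          rcases hcase with hsub | hsub
          · obtain ⟨y, hyx, hyN⟩ := exists_ne_mem_minN x hmix
            have hyA : y ∈ Γmap '' A := by
              rcases hsub hyN with h' | h'
              · exact h'
              · exact absurd h' hyx
            refine ⟨y, hyx, hyA, ?_⟩
            -- x ∈ closure {y}
            have hxcl : x ∈ closure ({y} : Set (ℤ × ℤ)) := by
              rw [mem_closure_iff]
              intro o ho hxo
              exact ⟨y, hyN o ⟨ho, hxo⟩, rfl⟩
            have : IsPreconnected ({y} : Set (ℤ × ℤ)) := isPreconnected_singleton
            refine this.subset_closure (by simp) ?_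
            intro z hz
            rcases hz with rfl | hz
            · exact hxcl
            · simp only [Set.mem_singleton_iff] at hz; subst hz
              exact subset_closure rfl
          · obtain ⟨y, hyx, hyN⟩ := exists_ne_mem_clPt x hmix
            have hyA : y ∈ Γmap '' A := by
              rcases hsub hyN with h' | h'
              · exact h'
              · exact absurd h' hyx
            refine ⟨y, hyx, hyA, ?_⟩
            have : IsPreconnected ({x} : Set (ℤ × ℤ)) := isPreconnected_singleton
            refine this.subset_closure (by simp) ?_
            intro z hz
            rcases hz with rfl | hz
            · exact subset_closure rfl
            · simp only [Set.mem_singleton_iff] at hz; subst hz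
              exact hyN
        obtain ⟨y, hyx, hyA, hpair⟩ := this
        have heq : insert x (Γmap '' A) = ({x, y} : Set (ℤ × ℤ)) ∪ Γmap '' A := by
          ext z
          simp only [Set.mem_insert_iff, Set.mem_union, Set.mem_singleton_iff]
          constructor
          · rintro (rfl | hz)
            · exact Or.inl (Or.inl rfl)
            · exact Or.inr hz
          · rintro ((rfl | rfl) | hz)
            · exact Or.inl rfl
            · exact Or.inr hyA
            · exact Or.inr hz
        rw [heq]
        exact IsPreconnected.union y (by simp) hyA hpair hpre
    have heq : ΓStar A = ⋃₀ ((fun x => insert x (Γmap '' A)) '' (ΓStar A)) := by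
      ext z
      simp only [Set.sUnion_image, Set.mem_iUnion]
      constructor
      · intro hz; exact ⟨z, hz, Set.mem_insert z _⟩
      · rintro ⟨x, hx, (rfl | hz)⟩
        · exact hx
        · exact Or.inl hz
    rw [heq]
    apply isPreconnected_sUnion s0
    · rintro s ⟨x, _, rfl⟩
      exact Set.mem_insert_of_mem x hs0
    · rintro s ⟨x, hx, rfl⟩
      exact key x hx
end
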